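/- arXiv:1604.04593 — 3 statements merged into one kernel-verified Lean document; each statement's English description precedes it below -/
import Mathlib

section
/- If f : ℝ^n → ℝ^n is additive 1-homogeneous and monotone, and v ∈ ℝ^n and μ ∈ ℝ satisfy f(v) = μ·1 + v, then for every x ∈ ℝ^n the asymptotic average growth rate lim_{k→∞} f^k(x)/k exists and equals μ·1. -/
/-!
Monotonicity and additive homogeneity make `f` nonexpansive in the sup norm, so the orbit of `x`
stays within distance `‖x - v‖` of the orbit of `v`, which is `f^[k] v = k • μ + v`. Dividing by `k`
kills this bounded discrepancy.
-/

open Filter Topology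

theorem tendsto_div_natCast_of_dist_le {u : ℕ → ℝ} {μ C : ℝ} (h : ∀ k : ℕ, dist (u k) (k * μ) ≤ C) :
    Tendsto (fun k : ℕ => u k / k) atTop (𝓝 μ) := by
  rw [← tendsto_sub_nhds_zero_iff]
  refine squeeze_zero_norm' ?_ (tendsto_const_div_atTop_nhds_zero_nat C)
  filter_upwards [eventually_ge_atTop 1] with k hk
  have hk : (0 : ℝ) < k := by exact_mod_cast hk
  have hsub : u k / k - μ = (u k - k * μ) / k := by field_simp
  rw [hsub, norm_div, ← dist_eq_norm, Real.norm_natCast]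
  exact div_le_div_of_nonneg_right (h k) hk.le

section AdditivelyHomogeneous

variable {ι : Type*} {f : (ι → ℝ) → ι → ℝ}

theorem apply_le_dist_add_of_monotone [Fintype ι]
    (hhom : ∀ (a : ℝ) (x : ι → ℝ), f (fun i => a + x i) = fun i => a + f x i) (hmono : Monotone f)
    (x y : ι → ℝ) (i : ι) : f x i ≤ dist x y + f y i := by
  have hxy : x ≤ fun j => dist x y + y j := fun j => by
    linarith [Real.sub_le_dist (x j) (y j), dist_le_pi_dist x y j]
  simpa [hhom] using hmono hxy i

theorem lipschitzWith_one_of_monotone [Fintype ι]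
    (hhom : ∀ (a : ℝ) (x : ι → ℝ), f (fun i => a + x i) = fun i => a + f x i) (hmono : Monotone f) :
    LipschitzWith 1 f := by
  refine LipschitzWith.of_dist_le_mul fun x y => ?_
  rw [NNReal.coe_one, one_mul, dist_pi_le_iff dist_nonneg]
  intro i
  rw [Real.dist_eq, abs_sub_le_iff]
  constructor <;> linarith [apply_le_dist_add_of_monotone hhom hmono x y i,
    apply_le_dist_add_of_monotone hhom hmono y x i, dist_comm x y]

theorem iterate_eq_of_apply_eq_add
    (hhom : ∀ (a : ℝ) (x : ι → ℝ), f (fun i => a + x i) = fun i => a + f x i)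
    {μ : ℝ} {v : ι → ℝ} (heig : f v = fun i => μ + v i) (k : ℕ) :
    f^[k] v = fun i => k * μ + v i := by
  induction k with
  | zero => simp
  | succ k ih =>
    rw [Function.iterate_succ_apply', ih, hhom, heig]
    push_cast
    ext i
    ring

end AdditivelyHomogeneous

theorem stmt_1 (n : ℕ) (f : (Fin n → ℝ) → (Fin n → ℝ))
    (hhom : ∀ (a : ℝ) (x : Fin n → ℝ), f (fun i => a + x i) = fun i => a + f x i)
    (hmono : Monotone f)
    (μ : ℝ) (v : Fin n → ℝ) (heig : f v = fun i => μ + v i) :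
    ∀ (x : Fin n → ℝ) (i : Fin n),
      Tendsto (fun k : ℕ => (f^[k] x i) / (k : ℝ)) atTop (𝓝 μ) := by
  intro x i
  refine tendsto_div_natCast_of_dist_le (C := dist x v + |v i|) fun k => ?_
  have hlip : LipschitzWith 1 f^[k] := by
    simpa using (lipschitzWith_one_of_monotone hhom hmono).iterate k
  have horbit : dist (f^[k] x i) (f^[k] v i) ≤ dist x v := by
    simpa using (dist_le_pi_dist _ _ i).trans (hlip.dist_le_mul x v)
  calc dist (f^[k] x i) (k * μ)
      ≤ dist (f^[k] x i) (f^[k] v i) + dist (f^[k] v i) (k * μ) := dist_triangle _ _ _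
    _ ≤ dist x v + |v i| := by
      have hv : f^[k] v i = k * μ + v i := congrFun (iterate_eq_of_apply_eq_add hhom heig k) i
      exact add_le_add horbit (by rw [hv, Real.dist_eq, add_sub_cancel_left])
end

section
/- If f : ℝ^n → ℝ^n is additive 1-homogeneous and monotone with eigenpairs (μ₁, v₁) and (μ₂, v₂), i.e. f(v₁) = μ₁·1 + v₁ and f(v₂) = μ₂·1 + v₂, then μ₁ = μ₂. -/
/- Shifting `v₂` by the largest gap `a = max (v₁ - v₂)` dominates `v₁`, with equality at the
coordinate `j` where the maximum is attained; applying `f` and reading off coordinate `j`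
gives `μ₁ + v₁ j ≤ a + μ₂ + v₂ j = μ₂ + v₁ j`. -/
theorem eigenvalue_le_of_monotone_of_add_homogeneous {ι : Type*} [Finite ι] [Nonempty ι]
    {f : (ι → ℝ) → ι → ℝ}
    (hhom : ∀ (a : ℝ) (x : ι → ℝ), f (fun i => a + x i) = fun i => a + f x i)
    (hmono : Monotone f) {μ₁ μ₂ : ℝ} {v₁ v₂ : ι → ℝ}
    (h₁ : f v₁ = fun i => μ₁ + v₁ i) (h₂ : f v₂ = fun i => μ₂ + v₂ i) :
    μ₁ ≤ μ₂ := by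
  obtain ⟨j, hj⟩ := Finite.exists_max fun i => v₁ i - v₂ i
  have hdom : v₁ ≤ fun i => (v₁ j - v₂ j) + v₂ i := fun i => by
    have := hj i
    dsimp only
    linarith
  have hj_le := hmono hdom j
  rw [hhom, h₁, h₂] at hj_le
  dsimp only at hj_le
  linarith

theorem stmt_2 (n : ℕ) (f : (Fin n → ℝ) → (Fin n → ℝ))
    (hhom : ∀ (a : ℝ) (x : Fin n → ℝ), f (fun i => a + x i) = fun i => a + f x i)
    (hmono : Monotone f)
    (μ₁ μ₂ : ℝ) (v₁ v₂ : Fin n → ℝ) (hn : 0 < n)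
    (h₁ : f v₁ = fun i => μ₁ + v₁ i)
    (h₂ : f v₂ = fun i => μ₂ + v₂ i) :
    μ₁ = μ₂ := by
  have : Nonempty (Fin n) := ⟨⟨0, hn⟩⟩
  exact le_antisymm (eigenvalue_le_of_monotone_of_add_homogeneous hhom hmono h₁ h₂)
    (eigenvalue_le_of_monotone_of_add_homogeneous hhom hmono h₂ h₁)
end

section
/- Let n ≥ 2 and b ∈ {0,1}^n with m = Σ_j b_j satisfying 0 < m < n. Consider the directed graph G on nodes {1,…,n} (indices mod n) with, for each j: a 'forward' arc from j−1 to j of weight t_j and duration b_j, and a 'backward' arc from j+1 to j of weight s_{j+1} and duration 1−b_{j+1}, where t_j, s_j ∈ ℝ. Then G is strongly connected, and the elementary cycles of G are exactly: the forward Hamiltonian cycle (weight Σ_j t_j, duration m), the backward Hamiltonian cycle (weight Σ_j s_j, duration n−m), and for each j the 2-cycle using the forward arc into j and the backward arc into j−1 (weight t_j + s_j, duration 1). Consequently the maximum cycle mean of G equals max( (Σ_j t_j)/m , max_j (t_j + s_j) , (Σ_j s_j)/(n−m) ). -/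
/-- An arc is a tuple (source, target, weight, duration). -/
abbrev TrainArc (n : ℕ) := Fin n × Fin n × ℝ × ℕ

/-- The arcs of the precedence graph of the max-plus train model on a ring of `n`
segments: for each `j`, a forward arc `j-1 → j` of weight `t j` and duration `b j`,
and a backward arc `j+1 → j` of weight `s (j+1)` and duration `1 - b (j+1)`. -/
def trainArcSet (n : ℕ) [NeZero n] (b : Fin n → ℕ) (t s : Fin n → ℝ) :
    Set (TrainArc n) :=
  {a | ∃ j : Fin n, a = (j - 1, j, t j, b j)} ∪
    {a | ∃ j : Fin n, a = (j + 1, j, s (j + 1), 1 - b (j + 1))}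

/-- A cycle: a nonempty list of arcs of the graph, consecutively chained, and closed. -/
def IsTrainCycle (n : ℕ) [NeZero n] (b : Fin n → ℕ) (t s : Fin n → ℝ)
    (l : List (TrainArc n)) : Prop :=
  l ≠ [] ∧ (∀ a ∈ l, a ∈ trainArcSet n b t s) ∧
    List.Chain' (fun a a' : TrainArc n => a.2.1 = a'.1) l ∧
    (l.getLast?.map fun a : TrainArc n => a.2.1) = (l.head?.map fun a : TrainArc n => a.1)

/-- Elementary: no vertex is visited twice (the sources of the arcs are pairwise distinct). -/
def IsElementary (n : ℕ) (l : List (TrainArc n)) : Prop :=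
  (l.map fun a : TrainArc n => a.1).Nodup

/-- Weight of a cycle. -/
def cycW (n : ℕ) (l : List (TrainArc n)) : ℝ := (l.map fun a : TrainArc n => a.2.2.1).sum

/-- Duration of a cycle. -/
def cycD (n : ℕ) (l : List (TrainArc n)) : ℕ := (l.map fun a : TrainArc n => a.2.2.2).sum

/-!
Every arc of the ring either moves one step forward (`u → u + 1`) or one step backward
(`u → u - 1`). Along an elementary cycle, as long as consecutive arcs go the same way the
sources keep moving in that direction; if all arcs go the same way, the set of sources is
closed under `± 1` and hence is the whole ring, so the cycle is a rotation of a Hamiltonian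
cycle. Otherwise some forward arc is adjacent to a backward arc, the pair already returns to
its starting vertex, and elementarity forces the cycle to be just this pair. The cycle means
are thus the three announced kinds of values, all realized, and the maximum is their maximum.
-/

theorem Fin.eq_univ_of_add_one_mem {n : ℕ} [NeZero n] {S : Set (Fin n)} (hS : S.Nonempty)
    (h : ∀ v ∈ S, v + 1 ∈ S) : S = Set.univ := by
  obtain ⟨N, rfl⟩ := Nat.exists_eq_add_one_of_ne_zero (NeZero.ne n)
  obtain ⟨u, hu⟩ := hS
  have hshift : ∀ i : Fin (N + 1), u + i ∈ S := by
    refine Fin.induction (by simpa using hu) fun i hi => ?_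
    rw [← Fin.coeSucc_eq_succ, ← add_assoc]
    exact h _ hi
  refine Set.eq_univ_of_forall fun v => ?_
  simpa using hshift (v - u)

theorem Fin.eq_univ_of_sub_one_mem {n : ℕ} [NeZero n] {S : Set (Fin n)} (hS : S.Nonempty)
    (h : ∀ v ∈ S, v - 1 ∈ S) : S = Set.univ := by
  have hneg : -S = Set.univ := by
    refine Fin.eq_univ_of_add_one_mem hS.neg fun v hv => ?_
    have := h _ hv
    rwa [Set.mem_neg, neg_add']
  simpa using congrArg Neg.neg hneg

theorem Fin.transGen_of_forall_rel_add_one {n : ℕ} [NeZero n] {r : Fin n → Fin n → Prop}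
    (h : ∀ i, r i (i + 1)) (i j : Fin n) : Relation.TransGen r i j := by
  have hreach : {j | Relation.TransGen r i j} = Set.univ :=
    Fin.eq_univ_of_add_one_mem ⟨i + 1, .single (h i)⟩ fun v hv => hv.tail (h v)
  exact (Set.eq_univ_iff_forall.mp hreach) j

theorem isGreatest_range_ciSup {ι α : Type*} [ConditionallyCompleteLinearOrder α] [Finite ι]
    [Nonempty ι] (f : ι → α) : IsGreatest (Set.range f) (⨆ i, f i) :=
  ⟨exists_eq_ciSup_of_finite, Set.forall_mem_range.mpr (le_ciSup (Finite.bddAbove_range f))⟩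

section ClosedWalk

variable {V X : Type*}

def IsClosedWalk (l : List (V × V × X)) : Prop :=
  l.IsChain (fun a a' => a.2.1 = a'.1) ∧
    (l.getLast?.map fun a => a.2.1) = (l.head?.map fun a => a.1)

namespace IsClosedWalk

variable {l : List (V × V × X)}

theorem snd_fst_mem_map_fst (hw : IsClosedWalk l) {a : V × V × X} (ha : a ∈ l) :
    a.2.1 ∈ l.map (·.1) := by
  obtain ⟨l₁, l₂, rfl⟩ := List.append_of_mem ha
  cases l₂ with
  | nil =>
    have hclosed := hw.2
    rw [List.getLast?_concat, ← List.head?_map] at hclosed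
    exact List.mem_of_mem_head? hclosed.symm
  | cons c l₂ =>
    have hac : a.2.1 = c.1 := List.isChain_iff_forall_rel_of_append_cons_cons.mp hw.1 rfl
    exact List.mem_map.mpr ⟨c, by simp, hac.symm⟩

theorem eq_pair_of_snd_fst_eq (hw : IsClosedWalk l) (hnd : (l.map (·.1)).Nodup)
    {x y : V × V × X} {l₁ l₂ : List (V × V × X)} (hl : l = l₁ ++ x :: y :: l₂)
    (hyx : y.2.1 = x.1) : l = [x, y] := by
  subst hl
  cases l₂ with
  | cons z l₂ =>
    have hyz : y.2.1 = z.1 := List.isChain_iff_forall_rel_of_append_cons_cons.mp hw.1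
      (l₁ := l₁ ++ [x]) (l₂ := l₂) (by simp)
    simp [List.nodup_append, ← hyz, hyx] at hnd
  | nil =>
    cases l₁ with
    | nil => rfl
    | cons d l₁ =>
      have hclosed := hw.2
      simp only [List.cons_append, List.head?_cons, Option.map_some] at hclosed
      rw [show d :: (l₁ ++ [x, y]) = (d :: l₁ ++ [x]) ++ [y] by simp, List.getLast?_concat,
        Option.map_some, Option.some_inj, hyx] at hclosed
      simp [List.nodup_append, hclosed] at hnd

end IsClosedWalk

theorem isClosedWalk_map_finRange {n : ℕ} [NeZero n] (arc : Fin n → V × V × X)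
    (h : ∀ i, (arc i).2.1 = (arc (i + 1)).1) : IsClosedWalk ((List.finRange n).map arc) := by
  obtain ⟨N, rfl⟩ := Nat.exists_eq_add_one_of_ne_zero (NeZero.ne n)
  refine ⟨List.isChain_iff_getElem.mpr fun i hi => ?_, ?_⟩
  · simp only [List.getElem_map, List.getElem_finRange, h]
    congr 2
    ext
    simp only [List.length_map, List.length_finRange] at hi
    simp [Fin.val_add, Nat.mod_eq_of_lt hi]
  · have hlast : (List.finRange (N + 1)).getLast? = some (Fin.last N) := by
      simp [List.finRange_succ_last]
    have hhead : (List.finRange (N + 1)).head? = some 0 := by simp [List.finRange_succ]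
    simp [hlast, hhead, h, Fin.last_add_one]

end ClosedWalk

section FinWalk

variable {n : ℕ} {X : Type*} {l : List (Fin n × Fin n × X)}

theorem IsClosedWalk.mem_map_fst_of_add_one [NeZero n] (hw : IsClosedWalk l) (hne : l ≠ [])
    (h : ∀ a ∈ l, a.2.1 = a.1 + 1) (v : Fin n) : v ∈ l.map (·.1) := by
  have hS : {v | v ∈ l.map (·.1)} = Set.univ := by
    refine Fin.eq_univ_of_add_one_mem ?_ fun v hv => ?_
    · obtain ⟨a, ha⟩ := List.exists_mem_of_ne_nil l hne
      exact ⟨a.1, List.mem_map_of_mem ha⟩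
    · obtain ⟨a, ha, rfl⟩ := List.mem_map.mp hv
      exact h a ha ▸ hw.snd_fst_mem_map_fst ha
  exact Set.eq_univ_iff_forall.mp hS v

theorem IsClosedWalk.mem_map_fst_of_sub_one [NeZero n] (hw : IsClosedWalk l) (hne : l ≠ [])
    (h : ∀ a ∈ l, a.2.1 = a.1 - 1) (v : Fin n) : v ∈ l.map (·.1) := by
  have hS : {v | v ∈ l.map (·.1)} = Set.univ := by
    refine Fin.eq_univ_of_sub_one_mem ?_ fun v hv => ?_
    · obtain ⟨a, ha⟩ := List.exists_mem_of_ne_nil l hne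
      exact ⟨a.1, List.mem_map_of_mem ha⟩
    · obtain ⟨a, ha, rfl⟩ := List.mem_map.mp hv
      exact h a ha ▸ hw.snd_fst_mem_map_fst ha
  exact Set.eq_univ_iff_forall.mp hS v

theorem List.perm_map_finRange_of_forall_eq (f : Fin n → Fin n × Fin n × X)
    (hnd : (l.map (·.1)).Nodup) (hcover : ∀ v, v ∈ l.map (·.1))
    (hf : ∀ a ∈ l, a = f a.1) :
    l.Perm ((List.finRange n).map f) := by
  have hl : l = (l.map (·.1)).map f := by
    rw [List.map_map]
    conv_lhs => rw [← List.map_id l]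
    exact List.map_congr_left hf
  rw [hl]
  exact ((List.perm_ext_iff_of_nodup hnd (List.nodup_finRange n)).mpr
    fun v => by simp only [hcover v, List.mem_finRange]).map f

end FinWalk

theorem cycW_perm {n : ℕ} {l l' : List (TrainArc n)} (h : l.Perm l') : cycW n l = cycW n l' :=
  (h.map _).sum_eq

theorem cycD_perm {n : ℕ} {l l' : List (TrainArc n)} (h : l.Perm l') : cycD n l = cycD n l' :=
  (h.map _).sum_eq

theorem IsTrainCycle.isClosedWalk {n : ℕ} [NeZero n] {b : Fin n → ℕ} {t s : Fin n → ℝ}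
    {l : List (TrainArc n)} (hl : IsTrainCycle n b t s l) : IsClosedWalk l :=
  hl.2.2

namespace TrainRing

variable {n : ℕ} [NeZero n] (b : Fin n → ℕ) (t s : Fin n → ℝ)

-- Arcs are indexed by their source here, while `trainArcSet` indexes them by their target.
def fwdArc (u : Fin n) : TrainArc n := (u, u + 1, t (u + 1), b (u + 1))

def bwdArc (u : Fin n) : TrainArc n := (u, u - 1, s u, 1 - b u)

def fwdCycle : List (TrainArc n) := (List.finRange n).map (fwdArc b t)

def bwdCycle : List (TrainArc n) := (List.finRange n).map fun i => bwdArc b s (-i)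

def twoCycle (j : Fin n) : List (TrainArc n) := [fwdArc b t (j - 1), bwdArc b s j]

def cycleMeans : Set ℝ :=
  {x | ∃ l, IsTrainCycle n b t s l ∧ IsElementary n l ∧ x = cycW n l / (cycD n l : ℝ)}

variable {b t s}

theorem mem_trainArcSet_iff {a : TrainArc n} :
    a ∈ trainArcSet n b t s ↔ a = fwdArc b t a.1 ∨ a = bwdArc b s a.1 := by
  constructor
  · rintro (⟨j, rfl⟩ | ⟨j, rfl⟩) <;> simp [fwdArc, bwdArc]
  · rintro (h | h)
    · exact .inl ⟨a.1 + 1, by rw [h]; simp [fwdArc]⟩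
    · exact .inr ⟨a.1 - 1, by rw [h]; simp [bwdArc]⟩

theorem fwdArc_mem_trainArcSet (u : Fin n) : fwdArc b t u ∈ trainArcSet n b t s :=
  mem_trainArcSet_iff.mpr (.inl rfl)

theorem bwdArc_mem_trainArcSet (u : Fin n) : bwdArc b s u ∈ trainArcSet n b t s :=
  mem_trainArcSet_iff.mpr (.inr rfl)

theorem isTrainCycle_fwdCycle : IsTrainCycle n b t s (fwdCycle b t) :=
  ⟨by simp [fwdCycle, NeZero.ne n],
    fun _ ha => by
      obtain ⟨i, -, rfl⟩ := List.mem_map.mp ha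
      exact fwdArc_mem_trainArcSet i,
    isClosedWalk_map_finRange _ fun _ => rfl⟩

theorem isTrainCycle_bwdCycle : IsTrainCycle n b t s (bwdCycle b s) :=
  ⟨by simp [bwdCycle, NeZero.ne n],
    fun _ ha => by
      obtain ⟨i, -, rfl⟩ := List.mem_map.mp ha
      exact bwdArc_mem_trainArcSet (-i),
    isClosedWalk_map_finRange _ fun i => by simp [bwdArc]; abel⟩

theorem isTrainCycle_twoCycle (j : Fin n) : IsTrainCycle n b t s (twoCycle b t s j) := by
  refine ⟨List.cons_ne_nil _ _, ?_, List.isChain_pair.mpr (sub_add_cancel j 1), rfl⟩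
  simp only [twoCycle, List.mem_cons, List.not_mem_nil, or_false]
  rintro a (rfl | rfl)
  exacts [fwdArc_mem_trainArcSet _, bwdArc_mem_trainArcSet _]

theorem isElementary_fwdCycle : IsElementary n (fwdCycle b t) := by
  simpa [IsElementary, fwdCycle, fwdArc, List.map_map, Function.comp_def]
    using List.nodup_finRange n

theorem isElementary_bwdCycle : IsElementary n (bwdCycle b s) := by
  simpa [IsElementary, bwdCycle, bwdArc, List.map_map, Function.comp_def]
    using (List.nodup_finRange n).map neg_injective

theorem isElementary_twoCycle (hn : 2 ≤ n) (j : Fin n) : IsElementary n (twoCycle b t s j) := by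
  have hone : (1 : Fin n) ≠ 0 := by
    rw [Ne, Fin.ext_iff, Fin.val_one', Fin.val_zero, Nat.mod_eq_of_lt (by omega)]
    exact one_ne_zero
  simpa [IsElementary, twoCycle, fwdArc, bwdArc] using hone

theorem cycW_fwdCycle : cycW n (fwdCycle b t) = ∑ j, t j := by
  rw [cycW, fwdCycle, List.map_map, ← Fin.sum_univ_def]
  exact Fintype.sum_equiv (Equiv.addRight 1) _ _ fun _ => rfl

theorem cycD_fwdCycle : cycD n (fwdCycle b t) = ∑ j, b j := by
  rw [cycD, fwdCycle, List.map_map, ← Fin.sum_univ_def]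
  exact Fintype.sum_equiv (Equiv.addRight 1) _ _ fun _ => rfl

theorem cycW_bwdCycle : cycW n (bwdCycle b s) = ∑ j, s j := by
  rw [cycW, bwdCycle, List.map_map, ← Fin.sum_univ_def]
  exact Fintype.sum_equiv (Equiv.neg _) _ _ fun _ => rfl

theorem cycD_bwdCycle : cycD n (bwdCycle b s) = ∑ j, (1 - b j) := by
  rw [cycD, bwdCycle, List.map_map, ← Fin.sum_univ_def]
  exact Fintype.sum_equiv (Equiv.neg _) _ _ fun _ => rfl

theorem cycW_twoCycle (j : Fin n) : cycW n (twoCycle b t s j) = t j + s j := by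
  simp [cycW, twoCycle, fwdArc, bwdArc]

theorem cycD_twoCycle (hb : ∀ j, b j ≤ 1) (j : Fin n) : cycD n (twoCycle b t s j) = 1 := by
  simp [cycD, twoCycle, fwdArc, bwdArc, Nat.add_sub_cancel' (hb j)]

variable {l : List (TrainArc n)}

theorem perm_fwdCycle_of_forall_eq (hl : IsTrainCycle n b t s l) (he : IsElementary n l)
    (hfwd : ∀ a ∈ l, a = fwdArc b t a.1) : l.Perm (fwdCycle b t) :=
  List.perm_map_finRange_of_forall_eq _ he
    (hl.isClosedWalk.mem_map_fst_of_add_one hl.1 fun a ha => by rw [hfwd a ha]; rfl) hfwd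

theorem perm_bwdCycle_of_forall_eq (hl : IsTrainCycle n b t s l) (he : IsElementary n l)
    (hbwd : ∀ a ∈ l, a = bwdArc b s a.1) : l.Perm (bwdCycle b s) := by
  have hcover := hl.isClosedWalk.mem_map_fst_of_sub_one hl.1 fun a ha => by rw [hbwd a ha]; rfl
  refine (List.perm_map_finRange_of_forall_eq _ he hcover hbwd).trans ?_
  rw [bwdCycle, ← Function.comp_def, ← List.map_map]
  exact ((Equiv.neg (Fin n)).map_finRange_perm.map _).symm

theorem perm_twoCycle_of_turn {l₁ l₂ : List (TrainArc n)} {x y : TrainArc n}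
    (hl : IsTrainCycle n b t s l) (he : IsElementary n l) (hsplit : l = l₁ ++ x :: y :: l₂)
    (hturn : ¬(x = fwdArc b t x.1 ↔ y = fwdArc b t y.1)) : ∃ j, l.Perm (twoCycle b t s j) := by
  have hw := hl.isClosedWalk
  have hmem := hl.2.1
  have hxy : x.2.1 = y.1 := List.isChain_iff_forall_rel_of_append_cons_cons.mp hw.1 hsplit
  have hx := mem_trainArcSet_iff.mp (hmem x (by simp [hsplit]))
  have hy := mem_trainArcSet_iff.mp (hmem y (by simp [hsplit]))
  by_cases hxf : x = fwdArc b t x.1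
  · obtain ⟨u, rfl⟩ : ∃ u, x = fwdArc b t u := ⟨_, hxf⟩
    obtain ⟨v, rfl⟩ : ∃ v, y = bwdArc b s v :=
      ⟨_, hy.resolve_left fun hyf => hturn (iff_of_true hxf hyf)⟩
    obtain rfl : u + 1 = v := hxy
    refine ⟨u + 1, .of_eq ?_⟩
    rw [hw.eq_pair_of_snd_fst_eq he hsplit (add_sub_cancel_right u 1), twoCycle,
      add_sub_cancel_right]
  · obtain ⟨u, rfl⟩ : ∃ u, x = bwdArc b s u := ⟨_, hx.resolve_left hxf⟩
    obtain ⟨v, rfl⟩ : ∃ v, y = fwdArc b t v :=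
      ⟨_, not_not.mp fun hyf => hturn (iff_of_false hxf hyf)⟩
    obtain rfl : u - 1 = v := hxy
    refine ⟨u, ?_⟩
    rw [hw.eq_pair_of_snd_fst_eq he hsplit (sub_add_cancel u 1), twoCycle]
    exact .swap _ _ _

theorem perm_cases (hl : IsTrainCycle n b t s l) (he : IsElementary n l) :
    l.Perm (fwdCycle b t) ∨ l.Perm (bwdCycle b s) ∨ ∃ j, l.Perm (twoCycle b t s j) := by
  by_cases hchain : l.IsChain fun x y => (x = fwdArc b t x.1 ↔ y = fwdArc b t y.1)
  · by_cases hhead : l.head hl.1 = fwdArc b t (l.head hl.1).1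
    · exact .inl <| perm_fwdCycle_of_forall_eq hl he <|
        hchain.induction _ _ (fun _ _ hxy hx => hxy.mp hx) fun _ => hhead
    · refine .inr <| .inl <| perm_bwdCycle_of_forall_eq hl he fun a ha => ?_
      have hnf : a ≠ fwdArc b t a.1 :=
        hchain.induction (fun a => a ≠ fwdArc b t a.1) _ (fun _ _ hxy hx => mt hxy.mpr hx)
          (fun _ => hhead) a ha
      exact (mem_trainArcSet_iff.mp (hl.2.1 a ha)).resolve_left hnf
  · obtain ⟨x, y, l₁, l₂, hsplit, hturn⟩ : ∃ x y l₁ l₂, l = l₁ ++ x :: y :: l₂ ∧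
        ¬(x = fwdArc b t x.1 ↔ y = fwdArc b t y.1) := by
      simpa [List.isChain_iff_forall_rel_of_append_cons_cons] using hchain
    exact .inr <| .inr <| perm_twoCycle_of_turn hl he hsplit hturn

theorem cycW_cycD_cases (hb : ∀ j, b j ≤ 1) (hl : IsTrainCycle n b t s l)
    (he : IsElementary n l) :
    (cycW n l = ∑ j, t j ∧ cycD n l = ∑ j, b j) ∨
      (cycW n l = ∑ j, s j ∧ cycD n l = ∑ j, (1 - b j)) ∨
      ∃ j, cycW n l = t j + s j ∧ cycD n l = 1 := by
  rcases perm_cases hl he with h | h | ⟨j, h⟩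
  · exact .inl ⟨(cycW_perm h).trans cycW_fwdCycle, (cycD_perm h).trans cycD_fwdCycle⟩
  · exact .inr <| .inl ⟨(cycW_perm h).trans cycW_bwdCycle, (cycD_perm h).trans cycD_bwdCycle⟩
  · exact .inr <| .inr ⟨j, (cycW_perm h).trans (cycW_twoCycle j),
      (cycD_perm h).trans (cycD_twoCycle hb j)⟩

theorem cycleMeans_eq (hn : 2 ≤ n) (hb : ∀ j, b j ≤ 1) :
    cycleMeans b t s = insert ((∑ j, t j) / ((∑ j, b j : ℕ) : ℝ))
      (Set.range (fun j => t j + s j) ∪ {(∑ j, s j) / ((∑ j, (1 - b j) : ℕ) : ℝ)}) := by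
  ext x
  constructor
  · rintro ⟨l, hl, he, rfl⟩
    rcases cycW_cycD_cases hb hl he with ⟨hW, hD⟩ | ⟨hW, hD⟩ | ⟨j, hW, hD⟩ <;>
      simp [hW, hD]
  · rintro (rfl | ⟨j, rfl⟩ | rfl)
    · exact ⟨_, isTrainCycle_fwdCycle, isElementary_fwdCycle,
        by rw [cycW_fwdCycle, cycD_fwdCycle]⟩
    · exact ⟨_, isTrainCycle_twoCycle j, isElementary_twoCycle hn j,
        by simp [cycW_twoCycle, cycD_twoCycle hb]⟩
    · exact ⟨_, isTrainCycle_bwdCycle, isElementary_bwdCycle,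
        by rw [cycW_bwdCycle, cycD_bwdCycle]⟩

theorem isGreatest_cycleMeans (hn : 2 ≤ n) (hb : ∀ j, b j ≤ 1) :
    IsGreatest (cycleMeans b t s)
      (max ((∑ j, t j) / ((∑ j, b j : ℕ) : ℝ))
        (max (⨆ j, (t j + s j)) ((∑ j, s j) / ((∑ j, (1 - b j) : ℕ) : ℝ)))) := by
  rw [cycleMeans_eq hn hb]
  exact ((isGreatest_range_ciSup _).union isGreatest_singleton).insert _

end TrainRing

open TrainRing

theorem stmt_12_general (n : ℕ) [NeZero n] (hn : 2 ≤ n) (b : Fin n → ℕ)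
    (hb : ∀ j, b j ≤ 1) (m : ℕ) (hm : m = ∑ j, b j)
    (t s : Fin n → ℝ) :
    -- strong connectivity
    (∀ i j : Fin n,
      Relation.TransGen
        (fun i j : Fin n => ∃ a ∈ trainArcSet n b t s, a.1 = i ∧ a.2.1 = j) i j) ∧
    -- every elementary cycle is one of the three kinds (by weight and duration)
    (∀ l : List (TrainArc n), IsTrainCycle n b t s l → IsElementary n l →
      (cycW n l = ∑ j, t j ∧ cycD n l = m) ∨
      (cycW n l = ∑ j, s j ∧ cycD n l = n - m) ∨
      (∃ j : Fin n, cycW n l = t j + s j ∧ cycD n l = 1)) ∧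
    -- each of the three kinds is realized by an elementary cycle
    (∃ l, IsTrainCycle n b t s l ∧ IsElementary n l ∧
      cycW n l = ∑ j, t j ∧ cycD n l = m) ∧
    (∃ l, IsTrainCycle n b t s l ∧ IsElementary n l ∧
      cycW n l = ∑ j, s j ∧ cycD n l = n - m) ∧
    (∀ j : Fin n, ∃ l, IsTrainCycle n b t s l ∧ IsElementary n l ∧
      cycW n l = t j + s j ∧ cycD n l = 1) ∧
    -- consequently, the maximum cycle mean is the announced maximum
    IsGreatest {x : ℝ | ∃ l, IsTrainCycle n b t s l ∧ IsElementary n l ∧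
        x = cycW n l / (cycD n l : ℝ)}
      (max ((∑ j, t j) / (m : ℝ))
        (max (⨆ j, (t j + s j)) ((∑ j, s j) / ((n : ℝ) - (m : ℝ))))) := by
  have hsum : ∑ j, (1 - b j) + m = n := by
    rw [hm, ← Finset.sum_add_distrib]
    simp [Nat.sub_add_cancel (hb _)]
  have hbwd : ∑ j, (1 - b j) = n - m := by omega
  have hcast : ((∑ j, (1 - b j) : ℕ) : ℝ) = n - m := by
    rw [eq_sub_iff_add_eq, ← Nat.cast_add, hsum]
  refine ⟨Fin.transGen_of_forall_rel_add_one fun i => ⟨_, fwdArc_mem_trainArcSet i, rfl, rfl⟩,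
    fun l hl he => by rw [← hbwd, hm]; exact cycW_cycD_cases hb hl he,
    ⟨_, isTrainCycle_fwdCycle, isElementary_fwdCycle, cycW_fwdCycle, hm ▸ cycD_fwdCycle⟩,
    ⟨_, isTrainCycle_bwdCycle, isElementary_bwdCycle, cycW_bwdCycle, hbwd ▸ cycD_bwdCycle⟩,
    fun j => ⟨_, isTrainCycle_twoCycle j, isElementary_twoCycle hn j, cycW_twoCycle j,
      cycD_twoCycle hb j⟩, ?_⟩
  have hmean := isGreatest_cycleMeans (t := t) (s := s) hn hb
  rw [← hm, hcast] at hmean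
  exact hmean

theorem stmt_12 (n : ℕ) [NeZero n] (hn : 2 ≤ n) (b : Fin n → ℕ)
    (hb : ∀ j, b j ≤ 1) (m : ℕ) (hm : m = ∑ j, b j)
    (hm0 : 0 < m) (hmn : m < n) (t s : Fin n → ℝ) :
    -- strong connectivity
    (∀ i j : Fin n,
      Relation.TransGen
        (fun i j : Fin n => ∃ a ∈ trainArcSet n b t s, a.1 = i ∧ a.2.1 = j) i j) ∧
    -- every elementary cycle is one of the three kinds (by weight and duration)
    (∀ l : List (TrainArc n), IsTrainCycle n b t s l → IsElementary n l →
      (cycW n l = ∑ j, t j ∧ cycD n l = m) ∨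
      (cycW n l = ∑ j, s j ∧ cycD n l = n - m) ∨
      (∃ j : Fin n, cycW n l = t j + s j ∧ cycD n l = 1)) ∧
    -- each of the three kinds is realized by an elementary cycle
    (∃ l, IsTrainCycle n b t s l ∧ IsElementary n l ∧
      cycW n l = ∑ j, t j ∧ cycD n l = m) ∧
    (∃ l, IsTrainCycle n b t s l ∧ IsElementary n l ∧
      cycW n l = ∑ j, s j ∧ cycD n l = n - m) ∧
    (∀ j : Fin n, ∃ l, IsTrainCycle n b t s l ∧ IsElementary n l ∧
      cycW n l = t j + s j ∧ cycD n l = 1) ∧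
    -- consequently, the maximum cycle mean is the announced maximum
    IsGreatest {x : ℝ | ∃ l, IsTrainCycle n b t s l ∧ IsElementary n l ∧
        x = cycW n l / (cycD n l : ℝ)}
      (max ((∑ j, t j) / (m : ℝ))
        (max (⨆ j, (t j + s j)) ((∑ j, s j) / ((n : ℝ) - (m : ℝ))))) :=
  stmt_12_general n hn b hb m hm t s
end
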